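/- arXiv:1604.05414 — 2 statements merged into one kernel-verified Lean document; each statement's English description precedes it below -/
import Mathlib

section
/- Let G be an edgewise strongly shellable bipartite graph and w a vertex of G. If x is a vertex at distance 2 from w whose upward neighborhood uN_w(x) = N(x) ∩ D(w,3) is nonempty, then x is adjacent to every vertex at distance 1 from w, i.e., dN_w(x) = D(w,1). -/
/-!
Take `y ∈ D(w,1)` and `z ∈ uN_w(x)`. The edges `wy` and `xz` are distinct, so edgewise strong
shellability yields an edge with one endpoint in `{w, y}` and the other in `{x, z}`: the shelling
condition for the later of the two edges produces a 2-set `g ⊆ {w, y} ∪ {x, z}` missing exactly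
one vertex of the later edge. Along an edge the distance to `w` changes by at most one, and the
distances of `w, y, x, z` are `0, 1, 2, 3`, so that edge can only be `yx`.
-/

open scoped Classical

def StronglyShellable {α : Type*} [DecidableEq α] (F : Finset (Finset α)) : Prop :=
  ∃ l : List (Finset α), l.Nodup ∧ l.toFinset = F ∧
    ∀ i j : Fin l.length, (i : ℕ) < (j : ℕ) →
      ∃ k : Fin l.length, (k : ℕ) < (j : ℕ) ∧
        (l.get j \ l.get k).card = 1 ∧
        l.get i ∩ l.get j ⊆ l.get k ∧ l.get k ⊆ l.get i ∪ l.get j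

def edgeSets {V : Type*} [Fintype V] [DecidableEq V] (G : SimpleGraph V) [DecidableRel G.Adj] :
    Finset (Finset V) :=
  G.edgeFinset.image (Sym2.lift ⟨fun u v => ({u, v} : Finset V), fun u v => Finset.pair_comm u v⟩)

lemma Finset.exists_eq_pair_of_card_sdiff_eq_one {α : Type*} [DecidableEq α] {e f g : Finset α}
    (hg : g.card = 2) (hf : f.card = 2) (hfg : (f \ g).card = 1) (hsub : g ⊆ e ∪ f) :
    ∃ u ∈ e, ∃ v ∈ f, g = {u, v} := by
  have hgf : (g ∩ f).card = 1 := by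
    have := card_sdiff_add_card_inter f g
    rw [inter_comm]; omega
  have hgf' : (g \ f).card = 1 := by
    have := card_sdiff_add_card_inter g f
    omega
  obtain ⟨v, hv⟩ := card_eq_one.mp hgf
  obtain ⟨u, hu⟩ := card_eq_one.mp hgf'
  have hug : u ∈ g \ f := hu ▸ mem_singleton_self u
  have hvg : v ∈ g ∩ f := hv ▸ mem_singleton_self v
  refine ⟨u, ?_, v, (mem_inter.mp hvg).2, ?_⟩
  · exact (mem_union.mp (hsub (mem_sdiff.mp hug).1)).resolve_right (mem_sdiff.mp hug).2
  · rw [← sdiff_union_inter g f, hu, hv]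
    rfl

lemma StronglyShellable.exists_between {α : Type*} [DecidableEq α] {F : Finset (Finset α)}
    (hF : StronglyShellable F) {e f : Finset α} (he : e ∈ F) (hf : f ∈ F) (hef : e ≠ f) :
    ∃ g ∈ F, ((f \ g).card = 1 ∨ (e \ g).card = 1) ∧ e ∩ f ⊆ g ∧ g ⊆ e ∪ f := by
  obtain ⟨l, -, rfl, hl⟩ := hF
  obtain ⟨i, rfl⟩ := List.mem_iff_get.mp (List.mem_toFinset.mp he)
  obtain ⟨j, rfl⟩ := List.mem_iff_get.mp (List.mem_toFinset.mp hf)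
  have hij : (i : ℕ) ≠ j := fun h => hef (congrArg l.get (Fin.ext h))
  rcases hij.lt_or_gt with hij | hji
  · obtain ⟨k, -, hcard, hinter, hunion⟩ := hl i j hij
    exact ⟨l.get k, List.mem_toFinset.mpr (l.get_mem k), .inl hcard, hinter, hunion⟩
  · obtain ⟨k, -, hcard, hinter, hunion⟩ := hl j i hji
    exact ⟨l.get k, List.mem_toFinset.mpr (l.get_mem k), .inr hcard,
      Finset.inter_comm (l.get i) _ ▸ hinter, Finset.union_comm (l.get i) _ ▸ hunion⟩

lemma StronglyShellable.exists_pair_mem {α : Type*} [DecidableEq α] {F : Finset (Finset α)}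
    (hF : StronglyShellable F) (hF₂ : ∀ g ∈ F, g.card = 2) {e f : Finset α} (he : e ∈ F)
    (hf : f ∈ F) (hef : e ≠ f) :
    ∃ u ∈ e, ∃ v ∈ f, {u, v} ∈ F := by
  obtain ⟨g, hg, hcard | hcard, -, hsub⟩ := hF.exists_between he hf hef
  · obtain ⟨u, hu, v, hv, rfl⟩ :=
      Finset.exists_eq_pair_of_card_sdiff_eq_one (hF₂ g hg) (hF₂ f hf) hcard hsub
    exact ⟨u, hu, v, hv, hg⟩
  · obtain ⟨v, hv, u, hu, rfl⟩ :=
      Finset.exists_eq_pair_of_card_sdiff_eq_one (hF₂ g hg) (hF₂ e he) hcard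
        (Finset.union_comm e f ▸ hsub)
    exact ⟨u, hu, v, hv, Finset.pair_comm u v ▸ hg⟩

section edgeSets

variable {V : Type*} [Fintype V] [DecidableEq V] {G : SimpleGraph V} [DecidableRel G.Adj]

lemma mem_edgeSets {e : Finset V} : e ∈ edgeSets G ↔ ∃ u v, G.Adj u v ∧ e = {u, v} := by
  simp only [edgeSets, Finset.mem_image, Sym2.exists, SimpleGraph.mem_edgeFinset,
    SimpleGraph.mem_edgeSet, Sym2.lift_mk]
  exact exists₂_congr fun u v => and_congr_right fun _ => eq_comm

lemma card_of_mem_edgeSets {e : Finset V} (he : e ∈ edgeSets G) : e.card = 2 := by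
  obtain ⟨u, v, huv, rfl⟩ := mem_edgeSets.mp he
  exact Finset.card_pair huv.ne

lemma adj_of_pair_mem_edgeSets {u v : V} (h : {u, v} ∈ edgeSets G) : G.Adj u v := by
  obtain ⟨p, q, hpq, he⟩ := mem_edgeSets.mp h
  have huv : u ≠ v := by
    rintro rfl
    simpa using card_of_mem_edgeSets h
  have hu : u ∈ ({p, q} : Finset V) := he ▸ by simp
  have hv : v ∈ ({p, q} : Finset V) := he ▸ by simp
  simp only [Finset.mem_insert, Finset.mem_singleton] at hu hv
  rcases hu with rfl | rfl <;> rcases hv with rfl | rfl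
  exacts [absurd rfl huv, hpq, hpq.symm, absurd rfl huv]

lemma StronglyShellable.exists_adj_of_edges {a b c d : V}
    (hESS : StronglyShellable (edgeSets G)) (hab : G.Adj a b) (hcd : G.Adj c d)
    (hne : ({a, b} : Finset V) ≠ {c, d}) :
    ∃ u ∈ ({a, b} : Finset V), ∃ v ∈ ({c, d} : Finset V), G.Adj u v := by
  obtain ⟨u, hu, v, hv, huv⟩ := hESS.exists_pair_mem (fun _ => card_of_mem_edgeSets)
    (mem_edgeSets.mpr ⟨a, b, hab, rfl⟩) (mem_edgeSets.mpr ⟨c, d, hcd, rfl⟩) hne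
  exact ⟨u, hu, v, hv, adj_of_pair_mem_edgeSets huv⟩

end edgeSets

theorem stmt17_general {V : Type*} [Fintype V] [DecidableEq V] (G : SimpleGraph V)
    [DecidableRel G.Adj] (hESS : StronglyShellable (edgeSets G))
    (w x : V) (hx : G.dist w x = 2)
    (hup : ∃ z : V, G.Adj x z ∧ G.dist w z = 3) :
    {y : V | G.Adj x y ∧ G.dist w y = 1} = {y : V | G.dist w y = 1} := by
  obtain ⟨z, hxz, hz⟩ := hup
  ext y
  simp only [Set.mem_ofPred_eq]
  refine ⟨And.right, fun hy => ⟨?_, hy⟩⟩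
  have hne : ({w, y} : Finset V) ≠ {x, z} := by
    intro h
    have hw : w ∈ ({x, z} : Finset V) := h ▸ Finset.mem_insert_self w {y}
    rcases Finset.mem_insert.mp hw with rfl | hw
    · simp at hx
    · rw [Finset.mem_singleton.mp hw] at hz; simp at hz
  obtain ⟨a, ha, b, hb, hab⟩ :=
    hESS.exists_adj_of_edges (SimpleGraph.dist_eq_one_iff_adj.mp hy) hxz hne
  have hdist := hab.diff_dist_adj (u := w)
  simp only [Finset.mem_insert, Finset.mem_singleton] at ha hb
  rcases ha with rfl | rfl <;> rcases hb with rfl | rfl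
  all_goals first | exact hab.symm | omega | (rw [SimpleGraph.dist_self] at hdist; omega)

/-- In an ESS bipartite graph, if x is at distance 2 from w and has a neighbor at distance 3
from w, then x is adjacent to every vertex at distance 1 from w: dN_w(x) = D(w,1). -/
theorem stmt17 {V : Type*} [Fintype V] [DecidableEq V] (G : SimpleGraph V)
    [DecidableRel G.Adj] (hESS : StronglyShellable (edgeSets G)) (hbip : G.Colorable 2)
    (w x : V) (hx : G.dist w x = 2)
    (hup : ∃ z : V, G.Adj x z ∧ G.dist w z = 3) :
    {y : V | G.Adj x y ∧ G.dist w y = 1} = {y : V | G.dist w y = 1} :=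
  stmt17_general G hESS w x hx hup
end

section
/- Let G be a connected edgewise strongly shellable bipartite graph without isolated vertices. Then there exists a vertex w' of G such that every vertex of G has distance at most 2 from w'. -/
/-!
Shellability turns any two disjoint edges `e, f` into an edge `g ⊆ e ∪ f` with `|f \ g| = 1`
(or with `e` and `f` swapped), i.e. an edge joining `e` and `f`. In a bipartite graph this forbids
`u ~ b`, `u' ~ b'` with `u, u'` on one side, `b ≁ u'` and `b' ≁ u`, so the neighbourhoods of
the vertices of each side form a chain. A vertex `w` of maximum degree then has the largest
neighbourhood on its side, hence is adjacent to every vertex of the other side, and every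
vertex of its own side is reached through one of its neighbours.
-/
open scoped Classical

lemma StronglyShellable.exists_exchange {α : Type*} [DecidableEq α] {F : Finset (Finset α)}
    (hF : StronglyShellable F) {e f : Finset α} (he : e ∈ F) (hf : f ∈ F) (hef : e ≠ f) :
    ∃ g ∈ F, g ⊆ e ∪ f ∧ ((e \ g).card = 1 ∨ (f \ g).card = 1) := by
  obtain ⟨l, -, rfl, hshell⟩ := hF
  have later : ∀ i j : Fin l.length, i < j →
      ∃ g ∈ l.toFinset, g ⊆ l.get i ∪ l.get j ∧ (l.get j \ g).card = 1 := fun i j hij => by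
    obtain ⟨k, -, hcard, -, hsub⟩ := hshell i j hij
    exact ⟨l.get k, List.mem_toFinset.2 (l.get_mem k), hsub, hcard⟩
  obtain ⟨i, rfl⟩ := List.mem_iff_get.1 (List.mem_toFinset.1 he)
  obtain ⟨j, rfl⟩ := List.mem_iff_get.1 (List.mem_toFinset.1 hf)
  rcases lt_or_gt_of_ne (ne_of_apply_ne l.get hef) with hij | hji
  · obtain ⟨g, hg, hsub, hcard⟩ := later i j hij
    exact ⟨g, hg, hsub, Or.inr hcard⟩
  · obtain ⟨g, hg, hsub, hcard⟩ := later j i hji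
    exact ⟨g, hg, by rwa [Finset.union_comm], Or.inl hcard⟩

lemma Finset.inter_nonempty_of_card_sdiff_eq_one {α : Type*} [DecidableEq α]
    {e f g : Finset α} (hf : f.card = 2) (hg : g.card = 2) (hsub : g ⊆ e ∪ f)
    (hfg : (f \ g).card = 1) : (g ∩ e).Nonempty ∧ (g ∩ f).Nonempty := by
  constructor
  · by_contra hge
    have hgf : g ⊆ f := fun x hx =>
      (Finset.mem_union.1 (hsub hx)).resolve_left fun hxe =>
        hge ⟨x, Finset.mem_inter.2 ⟨hx, hxe⟩⟩
    rw [Finset.eq_of_subset_of_card_le hgf (by omega), Finset.sdiff_self] at hfg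
    simp at hfg
  · have := Finset.card_sdiff_add_card_inter f g
    rw [Finset.inter_comm, ← Finset.card_pos]
    omega

namespace SimpleGraph

lemma Adj.of_mem_pair {V : Type*} [DecidableEq V] {G : SimpleGraph V} {u v x y : V}
    (huv : G.Adj u v) (hx : x ∈ ({u, v} : Finset V)) (hy : y ∈ ({u, v} : Finset V)) (hxy : x ≠ y) : G.Adj x y := by
  simp only [Finset.mem_insert, Finset.mem_singleton] at hx hy
  rcases hx with rfl | rfl <;> rcases hy with rfl | rfl
  exacts [absurd rfl hxy, huv, huv.symm, absurd rfl hxy]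

variable {V : Type*} [Fintype V] [DecidableEq V] {G : SimpleGraph V} [DecidableRel G.Adj]

lemma mem_edgeSets_iff {g : Finset V} : g ∈ edgeSets G ↔ ∃ u v, G.Adj u v ∧ g = {u, v} := by
  simp only [edgeSets, Finset.mem_image, mem_edgeFinset]
  constructor
  · rintro ⟨s, hs, rfl⟩
    induction s using Sym2.ind with
    | _ u v => exact ⟨u, v, hs, rfl⟩
  · rintro ⟨u, v, huv, rfl⟩
    exact ⟨s(u, v), huv, rfl⟩

lemma exists_adj_of_disjoint_of_stronglyShellable (hESS : StronglyShellable (edgeSets G))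
    {e f : Finset V} (he : e ∈ edgeSets G) (hf : f ∈ edgeSets G) (hef : Disjoint e f) :
    ∃ x ∈ e, ∃ y ∈ f, G.Adj x y := by
  have card_two : ∀ {s : Finset V}, s ∈ edgeSets G → s.card = 2 := fun hs => by
    obtain ⟨u, v, huv, rfl⟩ := mem_edgeSets_iff.1 hs
    exact Finset.card_pair huv.ne
  have hne : e ≠ f := fun h => by
    subst h
    have := card_two he
    rw [disjoint_self, Finset.bot_eq_empty] at hef
    simp [hef] at this
  obtain ⟨g, hg, hsub, hcard⟩ := hESS.exists_exchange he hf hne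
  have hmeet : (g ∩ e).Nonempty ∧ (g ∩ f).Nonempty := by
    rcases hcard with hcard | hcard
    · exact (Finset.inter_nonempty_of_card_sdiff_eq_one (card_two he) (card_two hg)
        (by rwa [Finset.union_comm]) hcard).symm
    · exact Finset.inter_nonempty_of_card_sdiff_eq_one (card_two hf) (card_two hg) hsub hcard
  obtain ⟨⟨x, hx⟩, ⟨y, hy⟩⟩ := hmeet
  obtain ⟨u, v, huv, rfl⟩ := mem_edgeSets_iff.1 hg
  simp only [Finset.mem_inter] at hx hy
  have hxy : x ≠ y := fun h => Finset.disjoint_left.1 hef hx.2 (h ▸ hy.2)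
  exact ⟨x, hx.2, y, hy.2, huv.of_mem_pair hx.1 hy.1 hxy⟩

lemma neighborFinset_subset_or_subset (hESS : StronglyShellable (edgeSets G))
    (C : G.Coloring (Fin 2)) {u u' : V} (hc : C u = C u') :
    G.neighborFinset u ⊆ G.neighborFinset u' ∨ G.neighborFinset u' ⊆ G.neighborFinset u := by
  by_contra! hcon
  obtain ⟨b, hbu, hbu'⟩ := Finset.not_subset.1 hcon.1
  obtain ⟨b', hb'u', hb'u⟩ := Finset.not_subset.1 hcon.2
  simp only [mem_neighborFinset] at hbu hbu' hb'u' hb'u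
  have hCb : C b ≠ C u := fun h => C.valid hbu h.symm
  have hCb' : C b' ≠ C u := fun h => C.valid hb'u' (h.trans hc).symm
  have hdisj : Disjoint ({u, b} : Finset V) {u', b'} := by
    simp only [Finset.disjoint_insert_left, Finset.disjoint_insert_right,
      Finset.disjoint_singleton, Finset.mem_insert, Finset.mem_singleton, not_or]
    refine ⟨⟨?_, ?_⟩, ?_, ?_⟩ <;> rintro rfl
    exacts [hbu' hbu, hCb hc.symm, hCb' rfl, hb'u hbu]
  obtain ⟨x, hx, y, hy, hxy⟩ := exists_adj_of_disjoint_of_stronglyShellable hESS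
    (mem_edgeSets_iff.2 ⟨u, b, hbu, rfl⟩) (mem_edgeSets_iff.2 ⟨u', b', hb'u', rfl⟩) hdisj
  simp only [Finset.mem_insert, Finset.mem_singleton] at hx hy
  rcases hx with rfl | rfl <;> rcases hy with rfl | rfl
  · exact C.valid hxy hc
  · exact hb'u hxy
  · exact hbu' hxy.symm
  · exact C.valid hxy (by omega)

lemma adj_of_degree_maximal_of_color_ne (hESS : StronglyShellable (edgeSets G))
    (hnoiso : ∀ v : V, ∃ u : V, G.Adj v u) (C : G.Coloring (Fin 2)) {w : V}
    (hw : ∀ u, G.degree u ≤ G.degree w) {v : V} (hv : C v ≠ C w) : G.Adj w v := by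
  obtain ⟨u, hvu⟩ := hnoiso v
  have hu : C u = C w := by have := C.valid hvu; omega
  have hsub : G.neighborFinset u ⊆ G.neighborFinset w := by
    rcases neighborFinset_subset_or_subset hESS C hu with h | h
    · exact h
    · rw [Finset.eq_of_subset_of_card_le h (hw u)]
  simpa using hsub ((mem_neighborFinset _ _ _).2 hvu.symm)

end SimpleGraph

open SimpleGraph in
/-- A connected ESS bipartite graph without isolated vertices has a vertex within distance 2
of every vertex. -/
theorem stmt18 {V : Type*} [Fintype V] [DecidableEq V] (G : SimpleGraph V)
    [DecidableRel G.Adj] (hconn : G.Connected) (hESS : StronglyShellable (edgeSets G))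
    (hbip : G.Colorable 2) (hnoiso : ∀ v : V, ∃ u : V, G.Adj v u) :
    ∃ w' : V, ∀ v : V, G.dist w' v ≤ 2 := by
  obtain ⟨C⟩ := hbip
  have := hconn.nonempty
  obtain ⟨w, hw⟩ := Finite.exists_max fun v => G.degree v
  have hw_adj {v : V} (hv : C v ≠ C w) : G.Adj w v :=
    adj_of_degree_maximal_of_color_ne hESS hnoiso C hw hv
  refine ⟨w, fun v => ?_⟩
  by_cases hv : C v = C w
  · obtain ⟨b, hvb⟩ := hnoiso v
    have hwb : G.Adj w b := hw_adj fun h => C.valid hvb (hv.trans h.symm)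
    calc G.dist w v ≤ G.dist w b + G.dist b v := hconn.dist_triangle
      _ = 2 := by rw [dist_eq_one_iff_adj.2 hwb, dist_eq_one_iff_adj.2 hvb.symm]
  · exact (dist_eq_one_iff_adj.2 (hw_adj hv)).le.trans one_le_two
end
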